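/- Let n, m be natural numbers and let Q be a real polynomial in the variables x, u_0, u_1, …, u_n. Assign the weights wt(x) = 1 and wt(u_i) = n − i, and for natural numbers ℓ, k let Q_{ℓ,k} denote the sum of those monomials of Q whose total degree in the variables u_0, …, u_n equals ℓ and whose total weight equals k. If T_Q[f] = Q(x, f, f', …, f^{(n)}) has degree at most m for every polynomial f of degree at most n, then for all ℓ, k the operator T_{Q_{ℓ,k}} also maps every polynomial of degree at most n to a polynomial of degree at most m. -/
import Mathlib

open Polynomial

/-- The action of a (possibly non-linear) differential operator of order at most `n`,
given by a polynomial `Q` in the variables `x, u_0, …, u_n` (variable `0` is `x`,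
variable `i+1` is `u_i`), on a polynomial `f`: `T_Q[f] = Q(x, f, f', …, f^{(n)})`. -/
noncomputable def Tact {n : ℕ} (Q : MvPolynomial (Fin (n + 2)) ℝ) (f : Polynomial ℝ) :
    Polynomial ℝ :=
  MvPolynomial.aeval
    (Fin.cases Polynomial.X (fun i : Fin (n + 1) => Polynomial.derivative^[(i : ℕ)] f)) Q

/-- The homogeneous component `Q_{ℓ,k}` of `Q`: the sum of those monomials of `Q` whose
total degree in the variables `u_0, …, u_n` is `ℓ` and whose total weight is `k`, where
`wt(x) = 1` and `wt(u_i) = n − i`. -/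
noncomputable def Qcomp {n : ℕ} (Q : MvPolynomial (Fin (n + 2)) ℝ) (l k : ℕ) :
    MvPolynomial (Fin (n + 2)) ℝ :=
  ∑ s ∈ Q.support.filter fun s : Fin (n + 2) →₀ ℕ =>
      (∑ i : Fin (n + 1), s i.succ) = l ∧
      (s 0 + ∑ i : Fin (n + 1), s i.succ * (n - (i : ℕ))) = k,
    MvPolynomial.monomial s (MvPolynomial.coeff s Q)

lemma coeff_comp_CsX (p : ℝ[X]) (s : ℝ) (j : ℕ) :
    (p.comp (C s * X)).coeff j = s ^ j * p.coeff j := by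
  induction p using Polynomial.induction_on' with
  | add p q hp hq => simp only [add_comp, coeff_add, hp, hq]; ring
  | monomial i a =>
      rw [monomial_comp]
      rw [mul_pow, ← C_pow, ← mul_assoc, ← C_mul, coeff_C_mul, coeff_X_pow, coeff_monomial]
      rcases eq_or_ne i j with rfl | hij
      · simp [mul_comm]
      · simp [hij, Ne.symm hij]

lemma deriv_iter_comp (p : ℝ[X]) (s : ℝ) (i : ℕ) :
    derivative^[i] (p.comp (C s * X)) = C (s ^ i) * (derivative^[i] p).comp (C s * X) := by
  induction i with
  | zero => simp
  | succ i ih =>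
      rw [Function.iterate_succ_apply', ih, Function.iterate_succ_apply']
      rw [derivative_C_mul, derivative_comp]
      simp only [derivative_C_mul, derivative_X, mul_one, pow_succ, C_mul]
      ring

lemma deriv_iter_smul (a : ℝ) (p : ℝ[X]) (i : ℕ) :
    derivative^[i] (a • p) = a • derivative^[i] p := by
  induction i with
  | zero => rfl
  | succ i ih =>
      rw [Function.iterate_succ_apply', ih, Function.iterate_succ_apply', derivative_smul]

lemma Tact_monomial {n : ℕ} (σ : Fin (n + 2) →₀ ℕ) (c : ℝ) (f : ℝ[X]) :
    Tact (MvPolynomial.monomial σ c) f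
      = C c * (X ^ σ 0 * ∏ i : Fin (n + 1), (derivative^[(i : ℕ)] f) ^ σ i.succ) := by
  rw [Tact, MvPolynomial.aeval_monomial]
  rw [Finsupp.prod_fintype _ _ (fun i => pow_zero _)]
  rw [Fin.prod_univ_succ]
  simp [algebraMap_eq]

lemma Tact_sum {n : ℕ} (S : Finset (Fin (n + 2) →₀ ℕ))
    (g : (Fin (n + 2) →₀ ℕ) → MvPolynomial (Fin (n + 2)) ℝ) (f : ℝ[X]) :
    Tact (∑ σ ∈ S, g σ) f = ∑ σ ∈ S, Tact (g σ) f := by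
  simp [Tact, map_sum]

lemma key_identity {n : ℕ} (σ : Fin (n + 2) →₀ ℕ) (c : ℝ) (f : ℝ[X]) (s : ℝ) (N : ℕ) :
    C (s ^ σ 0) * Tact (MvPolynomial.monomial σ c) ((s ^ N) • f.comp (C s * X))
      = C (s ^ (N * (∑ i : Fin (n + 1), σ i.succ) + ∑ i : Fin (n + 1), (i : ℕ) * σ i.succ))
          * (Tact (MvPolynomial.monomial σ c) f).comp (C s * X) := by
  rw [Tact_monomial, Tact_monomial]
  have hder : ∀ i : Fin (n + 1),
      derivative^[(i : ℕ)] ((s ^ N) • f.comp (C s * X))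
        = C (s ^ (N + (i : ℕ))) * (derivative^[(i : ℕ)] f).comp (C s * X) := by
    intro i
    rw [deriv_iter_smul, deriv_iter_comp, smul_eq_C_mul, ← mul_assoc, ← C_mul, ← pow_add]
  have hprod : ∏ i : Fin (n + 1), (derivative^[(i : ℕ)] ((s ^ N) • f.comp (C s * X))) ^ σ i.succ
      = C (s ^ (N * (∑ i : Fin (n + 1), σ i.succ) + ∑ i : Fin (n + 1), (i : ℕ) * σ i.succ))
        * ∏ i : Fin (n + 1), ((derivative^[(i : ℕ)] f).comp (C s * X)) ^ σ i.succ := by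
    simp only [hder, mul_pow, ← C_pow, ← pow_mul]
    rw [Finset.prod_mul_distrib, ← map_prod, Finset.prod_pow_eq_pow_sum]
    congr 2
    rw [Finset.mul_sum, ← Finset.sum_add_distrib]
    congr 1
    exact Finset.sum_congr rfl fun i _ => by ring
  rw [hprod]
  simp only [mul_comp, C_comp, pow_comp, X_comp, mul_pow, ← C_pow, prod_comp]
  ring

lemma unique_div (c a b x y : ℕ) (hx : x < c) (hy : y < c)
    (h : c * a + x = c * b + y) : a = b ∧ x = y := by
  have h1 : (c * a + x) % c = (c * b + y) % c := by rw [h]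
  rw [Nat.mul_add_mod, Nat.mul_add_mod, Nat.mod_eq_of_lt hx, Nat.mod_eq_of_lt hy] at h1
  refine ⟨?_, h1⟩
  have h2 : c * a = c * b := by omega
  exact Nat.eq_of_mul_eq_mul_left (by omega) h2

lemma support_bound {n : ℕ} (Q : MvPolynomial (Fin (n + 2)) ℝ) (σ : Fin (n + 2) →₀ ℕ)
    (hσ : σ ∈ Q.support) :
    σ 0 + ∑ i : Fin (n + 1), σ i.succ ≤ Q.totalDegree := by
  have h1 := MvPolynomial.le_totalDegree hσ
  rwa [Finsupp.sum_fintype _ _ (fun i => rfl), Fin.sum_univ_succ] at h1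

/-- key arithmetic relation between weight, degree and derivative-order sums -/
lemma weight_rel {n : ℕ} (σ : Fin (n + 2) →₀ ℕ) :
    (σ 0 + ∑ i : Fin (n + 1), σ i.succ * (n - (i : ℕ)))
      + ∑ i : Fin (n + 1), (i : ℕ) * σ i.succ
    = σ 0 + n * ∑ i : Fin (n + 1), σ i.succ := by
  rw [add_assoc, ← Finset.sum_add_distrib, Finset.mul_sum]
  congr 1
  refine Finset.sum_congr rfl fun i _ => ?_
  rw [mul_comm ((i : ℕ)) (σ i.succ), ← mul_add, Nat.sub_add_cancel i.is_le, mul_comm]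

lemma arith1 (D n K S L x N : ℕ) (hN : N = D * (n + 1) + 1)
    (hb : x + L ≤ D) (hr : K + S = x + n * L) : K < N := by
  have h3 : n * L ≤ n * D := Nat.mul_le_mul_left n (by omega)
  have h4 : D * (n + 1) = D + n * D := by ring
  omega

lemma arith3 (N n l k E0 : ℕ) (hk : k ≤ N) (hE : E0 = N + N * l + n * l - k) :
    E0 + k = N + (N + n) * l := by
  have h1 : (N + n) * l = N * l + n * l := by ring
  omega

lemma arith2 (N n L S K x E' : ℕ) (hr : K + S = x + n * L) (hx : x ≤ N)
    (hE : E' = N + N * L + S - x) : E' + K = N + (N + n) * L := by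
  have h1 : (N + n) * L = N * L + n * L := by ring
  omega

/-- If `T_Q` maps every polynomial of degree at most `n` to a polynomial
of degree at most `m`, then so does each homogeneous component `T_{Q_{ℓ,k}}` of the
decomposition of `Q` by degree of non-linearity `ℓ` and monomial weight `k`. -/
theorem decomposition_preserves_deficiency (n m : ℕ) (Q : MvPolynomial (Fin (n + 2)) ℝ)
    (h : ∀ f : Polynomial ℝ, f.degree ≤ (n : WithBot ℕ) →
      (Tact Q f).degree ≤ (m : WithBot ℕ)) :
    ∀ l k : ℕ, ∀ f : Polynomial ℝ, f.degree ≤ (n : WithBot ℕ) →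
      (Tact (Qcomp Q l k) f).degree ≤ (m : WithBot ℕ) := by
  intro l k f hf
  set D := Q.totalDegree with hD
  set N := D * (n + 1) + 1 with hN
  -- abbreviations
  set Lf : (Fin (n + 2) →₀ ℕ) → ℕ := fun σ => ∑ i : Fin (n + 1), σ i.succ with hLf
  set Sf : (Fin (n + 2) →₀ ℕ) → ℕ := fun σ => ∑ i : Fin (n + 1), (i : ℕ) * σ i.succ with hSf
  set Kf : (Fin (n + 2) →₀ ℕ) → ℕ :=
    fun σ => σ 0 + ∑ i : Fin (n + 1), σ i.succ * (n - (i : ℕ)) with hKf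
  set E : (Fin (n + 2) →₀ ℕ) → ℕ := fun σ => N + N * Lf σ + Sf σ - σ 0 with hE
  -- basic bounds for σ in the support
  have hbound : ∀ σ ∈ Q.support, σ 0 + Lf σ ≤ D := fun σ hσ => support_bound Q σ hσ
  have hrel : ∀ σ : Fin (n + 2) →₀ ℕ, Kf σ + Sf σ = σ 0 + n * Lf σ := fun σ => weight_rel σ
  have hKb : ∀ σ ∈ Q.support, Kf σ < N :=
    fun σ hσ => arith1 D n (Kf σ) (Sf σ) (Lf σ) (σ 0) N hN (hbound σ hσ) (hrel σ)
  have hσ0 : ∀ σ ∈ Q.support, σ 0 ≤ N := by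
    intro σ hσ
    have h1 := hbound σ hσ
    have h2 : D ≤ D * (n + 1) := Nat.le_mul_of_pos_right D (by omega)
    omega
  -- the scaled polynomial
  have hgdeg : ∀ s : ℝ, ((s ^ N) • f.comp (C s * X)).degree ≤ (n : WithBot ℕ) := by
    intro s
    rw [degree_le_iff_coeff_zero]
    intro j hj
    rw [coeff_smul, coeff_comp_CsX, (degree_le_iff_coeff_zero f n).1 hf j hj]
    simp
  -- the master identity
  have hmaster : ∀ s : ℝ,
      C (s ^ N) * Tact Q ((s ^ N) • f.comp (C s * X))
        = ∑ σ ∈ Q.support,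
            C (s ^ E σ) * (Tact (MvPolynomial.monomial σ (Q.coeff σ)) f).comp (C s * X) := by
    intro s
    conv_lhs => rw [← MvPolynomial.support_sum_monomial_coeff Q]
    rw [Tact_sum, Finset.mul_sum]
    refine Finset.sum_congr rfl fun σ hσ => ?_
    have h0 := hσ0 σ hσ
    have h1 := key_identity σ (Q.coeff σ) f s N
    calc C (s ^ N) * Tact (MvPolynomial.monomial σ (Q.coeff σ)) ((s ^ N) • f.comp (C s * X))
        = C (s ^ (N - σ 0)) *
            (C (s ^ σ 0) * Tact (MvPolynomial.monomial σ (Q.coeff σ)) ((s ^ N) • f.comp (C s * X))) := by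
          rw [← mul_assoc, ← C_mul, ← pow_add, Nat.sub_add_cancel h0]
      _ = C (s ^ (N - σ 0)) * (C (s ^ (N * Lf σ + Sf σ)) *
            (Tact (MvPolynomial.monomial σ (Q.coeff σ)) f).comp (C s * X)) := by rw [h1]
      _ = C (s ^ E σ) * (Tact (MvPolynomial.monomial σ (Q.coeff σ)) f).comp (C s * X) := by
          have hab : N - σ 0 + (N * Lf σ + Sf σ) = E σ := by
            show N - σ 0 + (N * Lf σ + Sf σ) = N + N * Lf σ + Sf σ - σ 0
            omega
          rw [← mul_assoc, ← C_mul, ← pow_add, hab]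
  -- whether the profile (l, k) occurs in the support
  by_cases hex : ∃ σ ∈ Q.support, Lf σ = l ∧ Kf σ = k
  · obtain ⟨σ₀, hσ₀, hL₀, hK₀⟩ := hex
    have hkN : k < N := hK₀ ▸ hKb σ₀ hσ₀
    set E0 : ℕ := N + N * l + n * l - k with hE0
    -- E characterizes the profile on the support
    have hEchar : ∀ σ ∈ Q.support, (E σ = E0 ↔ (Lf σ = l ∧ Kf σ = k)) := by
      intro σ hσ
      have h1 := hrel σ
      have h2 := hσ0 σ hσ
      have h3 := hKb σ hσ
      have hEK : E σ + Kf σ = N + (N + n) * Lf σ :=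
        arith2 N n (Lf σ) (Sf σ) (Kf σ) (σ 0) (E σ) h1 h2 rfl
      have hE0k : E0 + k = N + (N + n) * l := arith3 N n l k E0 (le_of_lt hkN) hE0
      constructor
      · intro heq
        have h4 : (N + n) * Lf σ + k = (N + n) * l + Kf σ := by omega
        have h5 := unique_div (N + n) (Lf σ) l k (Kf σ) (by omega) (by omega) h4
        exact ⟨h5.1, h5.2.symm⟩
      · rintro ⟨rfl, rfl⟩
        omega
    -- show all high coefficients vanish
    rw [degree_le_iff_coeff_zero]
    intro j hj
    have hjm : m < j := by exact_mod_cast hj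
    -- the polynomial in the scaling variable
    set p : ℝ[X] := ∑ σ ∈ Q.support,
        C ((Tact (MvPolynomial.monomial σ (Q.coeff σ)) f).coeff j) * X ^ E σ with hp
    have hroot : ∀ s : ℝ, s ≠ 0 → p.eval s = 0 := by
      intro s hs
      have hTQ : (Tact Q ((s ^ N) • f.comp (C s * X))).coeff j = 0 :=
        (degree_le_iff_coeff_zero _ m).1 (h _ (hgdeg s)) j hj
      have hcoeff := congrArg (fun q : ℝ[X] => q.coeff j) (hmaster s)
      simp only [coeff_C_mul, hTQ, mul_zero, finset_sum_coeff, coeff_comp_CsX] at hcoeff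
      have heval : p.eval s * s ^ j = 0 := by
        rw [hp]
        simp only [eval_finset_sum, eval_mul, eval_C, eval_pow, eval_X, Finset.sum_mul]
        calc ∑ σ ∈ Q.support,
              (Tact (MvPolynomial.monomial σ (Q.coeff σ)) f).coeff j * s ^ E σ * s ^ j
            = ∑ σ ∈ Q.support,
              s ^ E σ * (s ^ j * (Tact (MvPolynomial.monomial σ (Q.coeff σ)) f).coeff j) :=
              Finset.sum_congr rfl fun σ _ => by ring
          _ = 0 := hcoeff.symm
      rcases mul_eq_zero.1 heval with h' | h'
      · exact h'
      · exact absurd h' (pow_ne_zero j hs)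
    have hp0 : p = 0 := by
      apply eq_zero_of_infinite_isRoot
      apply Set.Infinite.mono (s := ({0}ᶜ : Set ℝ))
      · intro s hs
        exact hroot s hs
      · exact (Set.finite_singleton (0 : ℝ)).infinite_compl
    have hcoeffE0 : p.coeff E0 = 0 := by rw [hp0]; simp
    rw [hp] at hcoeffE0
    simp only [finset_sum_coeff, coeff_C_mul, coeff_X_pow] at hcoeffE0
    -- identify the coefficient sum with the component
    rw [Qcomp, Tact_sum, finset_sum_coeff]
    refine Eq.trans (Finset.sum_filter _ _) (Eq.trans (Finset.sum_congr rfl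
      fun σ hσ => ?_) hcoeffE0)
    split_ifs with h1 h2 h2
    · rw [mul_one]
    · exact absurd ((hEchar σ hσ).2 ⟨h1.1, h1.2⟩).symm h2
    · exact absurd ((hEchar σ hσ).1 h2.symm) h1
    · rw [mul_zero]
  · -- the component is zero
    have hfilter : Q.support.filter (fun σ : Fin (n + 2) →₀ ℕ =>
        (∑ i : Fin (n + 1), σ i.succ) = l ∧
        (σ 0 + ∑ i : Fin (n + 1), σ i.succ * (n - (i : ℕ))) = k) = ∅ := by
      rw [Finset.filter_eq_empty_iff]
      intro σ hσ hcond
      exact hex ⟨σ, hσ, hcond.1, hcond.2⟩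
    rw [Qcomp, hfilter, Finset.sum_empty]
    have : Tact (0 : MvPolynomial (Fin (n + 2)) ℝ) f = 0 := by simp [Tact]
    rw [this, degree_zero]
    exact bot_le
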